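/- arXiv:0906.2944 — 3 statements merged into one kernel-verified Lean document; each statement's English description precedes it below -/
import Mathlib

section
/- Let q₀ be a prime power, m > 2 a divisor of q₀+1, and Δ = (q₀+1)/m > 3 a prime. Then the numerical semigroup Θ generated by q₀+1-Δ together with the integers q₀+1-(Δ-1)/2, q₀+1-(Δ-1)/2+1, ..., q₀+1 has exactly g = m(q₀-2)/2 + 1 gaps, i.e., |ℕ \ Θ| = m(q₀-2)/2 + 1. -/
private lemma icc_sum_mem (L R : ℕ) (hLR : L ≤ R) :
    ∀ j t, j * L ≤ t → t ≤ j * R → t ∈ AddSubmonoid.closure (Set.Icc L R) := by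
  intro j
  induction j with
  | zero => intro t h1 h2; simp only [Nat.zero_mul, Nat.le_zero] at h2; subst h2; exact zero_mem _
  | succ j ih =>
    intro t h1 h2
    have e1 : (j+1) * L = j*L + L := by ring
    have e2 : (j+1) * R = j*R + R := by ring
    by_cases hc : t - j * L ≤ R
    · have ht : t = (t - j*L) + j*L := by omega
      rw [ht]
      exact add_mem (AddSubmonoid.subset_closure (Set.mem_Icc.2 ⟨by omega, hc⟩))
        (ih (j*L) le_rfl (Nat.mul_le_mul_left j hLR))
    · have ht : t = R + (t - R) := by omega
      rw [ht]
      exact add_mem (AddSubmonoid.subset_closure (Set.mem_Icc.2 ⟨hLR, le_rfl⟩))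
        (ih (t - R) (by omega) (by omega))

private lemma mem_closure_iff' (a L R x : ℕ) (hLR : L ≤ R) :
    x ∈ AddSubmonoid.closure ({a} ∪ Set.Icc L R) ↔
      ∃ k j t, j * L ≤ t ∧ t ≤ j * R ∧ x = k * a + t := by
  constructor
  · intro hx
    induction hx using AddSubmonoid.closure_induction with
    | mem y hy =>
      rcases hy with hy | hy
      · exact ⟨1, 0, 0, by simp, by simp, by simp [Set.mem_singleton_iff.1 hy]⟩
      · exact ⟨0, 1, y, by simpa using hy.1, by simpa using hy.2, by simp⟩
    | zero => exact ⟨0, 0, 0, by simp, by simp, by simp⟩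
    | add u v hu hv ihu ihv =>
      obtain ⟨k1, j1, t1, ha1, hb1, rfl⟩ := ihu
      obtain ⟨k2, j2, t2, ha2, hb2, rfl⟩ := ihv
      refine ⟨k1 + k2, j1 + j2, t1 + t2, ?_, ?_, by ring⟩
      · have : (j1+j2) * L = j1*L + j2*L := by ring
        omega
      · have : (j1+j2) * R = j1*R + j2*R := by ring
        omega
  · rintro ⟨k, j, t, h1, h2, rfl⟩
    refine add_mem ?_ (AddSubmonoid.closure_mono Set.subset_union_right (icc_sum_mem L R hLR j t h1 h2))
    induction k with
    | zero => simpa using zero_mem _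
    | succ k ihk =>
      have : (k+1) * a = k * a + a := by ring
      rw [this]
      exact add_mem ihk (AddSubmonoid.subset_closure (Or.inl rfl))

set_option maxHeartbeats 1000000 in
theorem stmt_0 (q₀ m Δ : ℕ)
    (hq : ∃ p k : ℕ, Nat.Prime p ∧ 0 < k ∧ q₀ = p ^ k)
    (hm : 2 < m) (hdvd : m ∣ q₀ + 1)
    (hΔ : Δ = (q₀ + 1) / m) (hprime : Nat.Prime Δ) (h3 : 3 < Δ) :
    {n : ℕ | n ∉ AddSubmonoid.closure
        ({q₀ + 1 - Δ} ∪ Set.Icc (q₀ + 1 - (Δ - 1) / 2) (q₀ + 1))}.ncard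
      = m * (q₀ - 2) / 2 + 1 := by
  clear hq
  have hmΔ : q₀ + 1 = m * Δ := by rw [hΔ, Nat.mul_div_cancel' hdvd]
  obtain ⟨d0, hd0⟩ := hprime.odd_of_ne_two (by omega)
  obtain ⟨d, hΔd⟩ : ∃ d, Δ = 2 * d + 1 := ⟨d0, by omega⟩
  clear hd0
  have hd2 : 2 ≤ d := by omega
  have hΔle : Δ ≤ m * Δ := Nat.le_mul_of_pos_left Δ (by omega)
  have hq14 : 14 ≤ q₀ := by
    have : 3 * 5 ≤ m * Δ := Nat.mul_le_mul (by omega) (by omega)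
    omega
  obtain ⟨a, ha_def⟩ : ∃ a, a = q₀ + 1 - Δ := ⟨_, rfl⟩
  rw [← ha_def]
  have haq : a + Δ = q₀ + 1 := by omega
  have hrwL : q₀ + 1 - (Δ - 1) / 2 = q₀ + 1 - d := by omega
  rw [hrwL]
  have h3Δ : 3 * Δ ≤ m * Δ := Nat.mul_le_mul_right _ (by omega)
  have hda : d < a := by omega
  -- membership characterization
  have hmem : ∀ x, x ∈ AddSubmonoid.closure ({a} ∪ Set.Icc (q₀+1-d) (q₀+1)) ↔
      ∃ k j s, s ≤ j * d ∧ x + s + k * Δ = (k + j) * (q₀ + 1) := by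
    intro x
    rw [mem_closure_iff' a (q₀+1-d) (q₀+1) x (by omega)]
    constructor
    · rintro ⟨k, j, t, h1, h2, rfl⟩
      refine ⟨k, j, j*(q₀+1) - t, ?_, ?_⟩
      · have e1 : j * (q₀+1-d) + j * d = j * (q₀+1) := by
          rw [← Nat.mul_add]; congr 1; omega
        omega
      · have e1 : j * (q₀+1-d) + j * d = j * (q₀+1) := by
          rw [← Nat.mul_add]; congr 1; omega
        have e2 : k * a + k * Δ = k * (q₀+1) := by rw [← Nat.mul_add, haq]
        have e3 : (k+j) * (q₀+1) = k * (q₀+1) + j * (q₀+1) := by ring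
        omega
    · rintro ⟨k, j, s, h1, h2⟩
      refine ⟨k, j, j*(q₀+1) - s, ?_, by omega, ?_⟩
      · have e1 : j * (q₀+1-d) + j * d = j * (q₀+1) := by
          rw [← Nat.mul_add]; congr 1; omega
        omega
      · have e1 : j * (q₀+1-d) + j * d = j * (q₀+1) := by
          rw [← Nat.mul_add]; congr 1; omega
        have e2 : k * a + k * Δ = k * (q₀+1) := by rw [← Nat.mul_add, haq]
        have e3 : (k+j) * (q₀+1) = k * (q₀+1) + j * (q₀+1) := by ring
        omega
  -- blocks of gaps
  set B : ℕ → Finset ℕ := fun n =>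
    Finset.Ico (n*(q₀+1)+1) ((n+1)*a) ∪ Finset.Icc ((n+1)*a+1) ((n+1)*a+d) with hB_def
  set G : Finset ℕ := (Finset.range m).biUnion B with hG_def
  have hterm : ∀ n, n < m → (n+1)*a = n*(q₀+1) + (m-1-n)*Δ := by
    intro n hn
    obtain ⟨c, hc⟩ : ∃ c, m = n + 1 + c := ⟨m - (n+1), by omega⟩
    have h1 : m - 1 - n = c := by omega
    have h2 : a = (n + c) * Δ := by
      have : m * Δ = (n + c) * Δ + Δ := by rw [hc]; ring
      omega
    rw [h1, h2, hmΔ, hc]; ring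
  -- elements of intervals [n*a+d+1, n*(q₀+1)] are in the semigroup
  have hInt : ∀ n x, 1 ≤ n → n*a + (d+1) ≤ x → x ≤ n*(q₀+1) →
      ∃ k j s, s ≤ j * d ∧ x + s + k * Δ = (k + j) * (q₀ + 1) := by
    intro n x hn hx1 hx2
    have hsplit : n*(q₀+1) = n*a + n*Δ := by rw [← haq]; ring
    obtain ⟨r, hr_def⟩ : ∃ r, r = n*(q₀+1) - x := ⟨_, rfl⟩
    obtain ⟨k, hk_def⟩ : ∃ k, k = r / Δ := ⟨_, rfl⟩
    obtain ⟨s, hs_def⟩ : ∃ s, s = r % Δ := ⟨_, rfl⟩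
    have hdm : Δ * k + s = r := by rw [hk_def, hs_def]; exact Nat.div_add_mod r Δ
    have hrx : x + r = n*(q₀+1) := by omega
    have hrb : r + (d+1) ≤ n*Δ := by omega
    have hsΔ : s < Δ := by rw [hs_def]; exact Nat.mod_lt _ (by omega)
    clear hk_def hs_def hr_def
    have hkn : k < n := by
      by_contra h
      have h1 : Δ * n ≤ Δ * k := Nat.mul_le_mul_left Δ (by omega)
      have h2 : n * Δ = Δ * n := by ring
      omega
    refine ⟨k, n - k, s, ?_, ?_⟩
    · rcases Nat.lt_or_ge (n - k) 2 with h2 | h2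
      · have hj1 : n - k = 1 := by omega
        have e1 : Δ * n = Δ * k + Δ * (n - k) := by rw [← Nat.mul_add]; congr 1; omega
        have e2 : n * Δ = Δ * n := by ring
        rw [hj1] at e1 ⊢
        omega
      · have : 2 * d ≤ (n - k) * d := Nat.mul_le_mul_right d h2
        omega
    · have e1 : (k + (n-k)) * (q₀+1) = n * (q₀+1) := by congr 1; omega
      have e2 : k * Δ = Δ * k := by ring
      omega
  -- multiples of a are in the semigroup
  have hMul : ∀ n : ℕ, ∃ k j s, s ≤ j * d ∧ n*a + s + k * Δ = (k + j) * (q₀ + 1) := by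
    intro n
    refine ⟨n, 0, 0, by simp, ?_⟩
    have e1 : n*a + n*Δ = n*(q₀+1) := by rw [← haq]; ring
    have e2 : (n+0) * (q₀+1) = n * (q₀+1) := by ring
    omega
  -- everything outside G is in the semigroup
  have hGS : ∀ x, x ∉ G → ∃ k j s, s ≤ j * d ∧ x + s + k * Δ = (k + j) * (q₀ + 1) := by
    intro x hxG
    rcases Nat.eq_zero_or_pos x with rfl | hx0
    · exact ⟨0, 0, 0, by simp, by simp⟩
    rcases Nat.lt_or_ge (m*a + d) x with hbig | hsmall
    · -- large x
      have hapos : 0 < a := by omega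
      obtain ⟨n, hn_def⟩ : ∃ n, n = (x - (d+1)) / a := ⟨_, rfl⟩
      obtain ⟨w, hw_def⟩ : ∃ w, w = (x - (d+1)) % a := ⟨_, rfl⟩
      have hdm : a * n + w = x - (d+1) := by
        rw [hn_def, hw_def]; exact Nat.div_add_mod _ a
      have hrr : w < a := by rw [hw_def]; exact Nat.mod_lt _ hapos
      clear hn_def hw_def
      have hmn : m ≤ n := by
        by_contra h
        have h1 : a * (n+1) ≤ a * m := Nat.mul_le_mul_left a (by omega)
        have h2 : a * (n+1) = a * n + a := by ring
        have h3 : a * m = m * a := by ring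
        omega
      have hx2 : x ≤ n * (q₀+1) := by
        have h1 : Δ * m ≤ Δ * n := Nat.mul_le_mul_left Δ hmn
        have h2 : Δ * m = m * Δ := by ring
        have h3 : n * (q₀+1) = a * n + Δ * n := by rw [← haq]; ring
        omega
      have hx1 : n*a + (d+1) ≤ x := by
        have h4 : a * n = n * a := by ring
        omega
      exact hInt n x (by omega) hx1 hx2
    · -- small x
      obtain ⟨n', hn'_def⟩ : ∃ n', n' = (x-1) / (q₀+1) := ⟨_, rfl⟩
      obtain ⟨w, hw_def⟩ : ∃ w, w = (x-1) % (q₀+1) := ⟨_, rfl⟩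
      have hdm : (q₀+1) * n' + w = x - 1 := by
        rw [hn'_def, hw_def]; exact Nat.div_add_mod _ _
      have hrr : w < q₀+1 := by rw [hw_def]; exact Nat.mod_lt _ (by omega)
      clear hn'_def hw_def
      have hn'm : n' < m := by
        by_contra h
        have h1 : (q₀+1) * m ≤ (q₀+1) * n' := Nat.mul_le_mul_left _ (by omega)
        have h2 : (q₀+1) * m = m * a + m * Δ := by rw [← haq]; ring
        have h3 : Δ ≤ m * Δ := Nat.le_mul_of_pos_left Δ (by omega)
        omega
      have hcm : (q₀+1) * n' = n' * (q₀+1) := by ring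
      have hxlow : n' * (q₀+1) + 1 ≤ x := by omega
      have hxhigh : x ≤ (n'+1) * (q₀+1) := by
        have h1 : (n'+1) * (q₀+1) = n' * (q₀+1) + (q₀+1) := by ring
        omega
      have hbn : x ∉ B n' := fun hmem' =>
        hxG (Finset.mem_biUnion.2 ⟨n', Finset.mem_range.2 hn'm, hmem'⟩)
      simp only [hB_def, Finset.mem_union, Finset.mem_Ico, Finset.mem_Icc] at hbn
      rcases Nat.lt_or_ge x ((n'+1)*a + 1) with hxa | hxa
      · have hxe : x = (n'+1)*a := by omega
        rw [hxe]
        exact hMul (n'+1)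
      · have hx1 : (n'+1)*a + (d+1) ≤ x := by omega
        exact hInt (n'+1) x (by omega) hx1 hxhigh
  -- everything in G is a gap
  have hSG : ∀ x, x ∈ G →
      (∃ k j s, s ≤ j * d ∧ x + s + k * Δ = (k + j) * (q₀ + 1)) → False := by
    intro x hxG hex
    obtain ⟨k, j, s, hs, heq⟩ := hex
    rw [hG_def] at hxG
    rw [Finset.mem_biUnion] at hxG
    obtain ⟨n, hnr, hblk⟩ := hxG
    rw [Finset.mem_range] at hnr
    simp only [hB_def, Finset.mem_union, Finset.mem_Ico, Finset.mem_Icc] at hblk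
    have ht := hterm n hnr
    have hx1 : n*(q₀+1) + 1 ≤ x := by omega
    have hx2 : x ≤ (n+1)*a + d := by omega
    have hx3 : x ≠ (n+1)*a := by omega
    rcases Nat.lt_or_ge (k+j) (n+1) with hw | hw
    · have h1 : (k+j)*(q₀+1) ≤ n*(q₀+1) := Nat.mul_le_mul_right _ (by omega)
      omega
    rcases Nat.lt_or_ge (n+1) (k+j) with hw2 | hw2
    · have h1 : s ≤ j * Δ := le_trans hs (Nat.mul_le_mul_left j (by omega))
      have h2 : (k+j)*(q₀+1) = (k+j)*a + k*Δ + j*Δ := by rw [← haq]; ring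
      have h3 : (n+2)*a ≤ (k+j)*a := Nat.mul_le_mul_right a (by omega)
      have h4 : (n+2)*a = (n+1)*a + a := by ring
      omega
    have hw3 : k + j = n + 1 := by omega
    rcases Nat.lt_or_ge k (n+1) with hkle | hkge
    · -- k ≤ n, j ≥ 1
      have hj1 : 1 ≤ j := by omega
      have h5 : (k+j)*(q₀+1) = (k+j)*a + k*Δ + j*Δ := by rw [← haq]; ring
      have h6 : (k+j)*a = (n+1)*a := by rw [hw3]
      have h7 : j*Δ = 2*(j*d) + j := by rw [hΔd]; ring
      have h8 : d ≤ j*d := Nat.le_mul_of_pos_left d hj1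
      omega
    · -- k = n+1, j = 0
      have hk : k = n + 1 := by omega
      have hj : j = 0 := by omega
      subst hk hj
      have h1 : ((n+1)+0)*(q₀+1) = (n+1)*a + (n+1)*Δ := by rw [← haq]; ring
      have h2 : 0 * d = 0 := by ring
      omega
  -- the gap set equals G
  have hGapsS : {x : ℕ | x ∉ AddSubmonoid.closure ({a} ∪ Set.Icc (q₀+1-d) (q₀+1))} = ↑G := by
    ext x
    simp only [Set.mem_setOf_eq, Finset.mem_coe]
    constructor
    · intro hx
      by_contra hxG
      exact hx ((hmem x).2 (hGS x hxG))
    · intro hxG hx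
      exact hSG x hxG ((hmem x).1 hx)
  rw [hGapsS, Set.ncard_coe_finset]
  -- counting
  have hdisj : ∀ p ∈ Finset.range m, ∀ q ∈ Finset.range m, p ≠ q → Disjoint (B p) (B q) := by
    have key : ∀ p q, p < q → q < m → Disjoint (B p) (B q) := by
      intro p q hpq hqm
      rw [Finset.disjoint_left]
      intro z hzp hzq
      simp only [hB_def, Finset.mem_union, Finset.mem_Ico, Finset.mem_Icc] at hzp hzq
      have h1 : (p+1)*(q₀+1) ≤ q*(q₀+1) := Nat.mul_le_mul_right _ (by omega)
      have h2 : (p+1)*(q₀+1) = (p+1)*a + (p+1)*Δ := by rw [← haq]; ring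
      have h3 : Δ ≤ (p+1)*Δ := Nat.le_mul_of_pos_left Δ (by omega)
      have h4 := hterm p (by omega)
      have h5 := hterm q hqm
      omega
    intro p hp q hq hpq
    simp only [Finset.mem_range] at hp hq
    rcases Nat.lt_or_ge p q with h | h
    · exact key p q h hq
    · exact (key q p (by omega) hp).symm
  rw [hG_def, Finset.card_biUnion hdisj]
  have hBcard : ∀ n ∈ Finset.range m, (B n).card = (m - 1 - n) * Δ - 1 + d := by
    intro n hn
    simp only [Finset.mem_range] at hn
    have hdisj2 : Disjoint (Finset.Ico (n*(q₀+1)+1) ((n+1)*a))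
        (Finset.Icc ((n+1)*a+1) ((n+1)*a+d)) := by
      rw [Finset.disjoint_left]
      intro z hz1 hz2
      simp only [Finset.mem_Ico, Finset.mem_Icc] at hz1 hz2
      omega
    simp only [hB_def]
    rw [Finset.card_union_of_disjoint hdisj2, Nat.card_Ico, Nat.card_Icc]
    have ht := hterm n hn
    omega
  rw [Finset.sum_congr rfl hBcard, Finset.sum_add_distrib, Finset.sum_const,
    Finset.card_range, smul_eq_mul, Finset.sum_range_reflect (fun c => c * Δ - 1) m]
  -- Gauss-type sum
  have hsum : ∀ M, 1 ≤ M →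
      (∑ c ∈ Finset.range M, (c * Δ - 1)) + M = Δ * (∑ c ∈ Finset.range M, c) + 1 := by
    intro M hM
    induction M, hM using Nat.le_induction with
    | base => simp
    | succ M hM0 ih =>
      rw [Finset.sum_range_succ, Finset.sum_range_succ (fun i => i)]
      have h1 : Δ * (∑ c ∈ Finset.range M, c + M) = Δ * (∑ c ∈ Finset.range M, c) + Δ * M := by
        ring
      have h2 : 0 < M * Δ := Nat.mul_pos hM0 (by omega)
      have h3 : M * Δ = Δ * M := by ring
      omega
  have hsum' := hsum m (by omega)
  have h2S := Finset.sum_range_id_mul_two m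
  obtain ⟨m1, rfl⟩ : ∃ m1, m = m1 + 1 := ⟨m - 1, by omega⟩
  have e0 : m1 + 1 - 1 = m1 := rfl
  rw [e0] at h2S
  have hA : 2 * (Δ * (∑ c ∈ Finset.range (m1+1), c)) = Δ * ((m1+1) * m1) := by
    rw [← h2S]; ring
  have hq2 : (q₀ - 2) + 3 = (m1+1) * Δ := by omega
  have hB2 : (m1+1)*((q₀-2)+3) = (m1+1)*(q₀-2) + 3*(m1+1) := by ring
  have hB3 : (m1+1)*((q₀-2)+3) = (m1+1)*((m1+1)*Δ) := by rw [hq2]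
  have hC : (m1+1)*((m1+1)*Δ) = Δ*((m1+1)*m1) + (m1+1)*Δ := by ring
  have hD : (m1+1)*Δ = 2*((m1+1)*d) + (m1+1) := by rw [hΔd]; ring
  omega
end

section
/- Let q₀ be a prime power such that Δ = (q₀+1)/2 is a prime greater than 3. Then the numerical semigroup Θ = ⟨q₀+1, q₀, q₀-1, ..., q₀+1-(Δ-1)/2, q₀+1-Δ⟩ (i.e., generated by q₀+1-Δ together with all integers from q₀+1-(Δ-1)/2 to q₀+1) has exactly q₀-1 gaps. -/
private def Mset (m : ℕ) : AddSubmonoid ℕ where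
  carrier := {n | n = 0 ∨ n = 2*m+1 ∨ (3*m+2 ≤ n ∧ n ≤ 4*m+2) ∨ 5*m+3 ≤ n}
  zero_mem' := Or.inl rfl
  add_mem' := by
    intro a b ha hb
    simp only [Set.mem_setOf_eq] at *
    omega

private lemma big_mem (m : ℕ) (hm : 2 ≤ m) :
    ∀ n, 5*m+3 ≤ n →
      n ∈ AddSubmonoid.closure ({2*m+1} ∪ Set.Icc (3*m+2) (4*m+2) : Set ℕ) := by
  intro n
  induction n using Nat.strong_induction_on with
  | _ n ih =>
    intro hn
    have hgen1 : (2*m+1 : ℕ) ∈ AddSubmonoid.closure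
        ({2*m+1} ∪ Set.Icc (3*m+2) (4*m+2) : Set ℕ) :=
      AddSubmonoid.subset_closure (Set.mem_union_left _ rfl)
    have hgen2 : ∀ x : ℕ, 3*m+2 ≤ x → x ≤ 4*m+2 →
        x ∈ AddSubmonoid.closure ({2*m+1} ∪ Set.Icc (3*m+2) (4*m+2) : Set ℕ) := by
      intro x h1 h2
      exact AddSubmonoid.subset_closure (Set.mem_union_right _ ⟨h1, h2⟩)
    rcases le_or_gt n (6*m+3) with h1 | h1
    · have hEq : n = (2*m+1) + (n - (2*m+1)) := by omega
      rw [hEq]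
      exact add_mem hgen1 (hgen2 _ (by omega) (by omega))
    rcases le_or_gt n (8*m+4) with h2 | h2
    · have hEq : n = (min (4*m+2) (n - (3*m+2))) + (n - min (4*m+2) (n - (3*m+2))) := by
        omega
      rw [hEq]
      exact add_mem (hgen2 _ (by omega) (by omega)) (hgen2 _ (by omega) (by omega))
    · have hEq : n = (2*m+1) + (n - (2*m+1)) := by omega
      rw [hEq]
      exact add_mem hgen1 (ih _ (by omega) (by omega))

private lemma mem_closure_key (m : ℕ) (hm : 2 ≤ m) (n : ℕ) :
    n ∈ AddSubmonoid.closure ({2*m+1} ∪ Set.Icc (3*m+2) (4*m+2) : Set ℕ) ↔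
      (n = 0 ∨ n = 2*m+1 ∨ (3*m+2 ≤ n ∧ n ≤ 4*m+2) ∨ 5*m+3 ≤ n) := by
  constructor
  · intro h
    have hle : AddSubmonoid.closure ({2*m+1} ∪ Set.Icc (3*m+2) (4*m+2) : Set ℕ) ≤ Mset m := by
      rw [AddSubmonoid.closure_le]
      intro x hx
      rcases hx with hx | hx
      · exact Or.inr (Or.inl hx)
      · exact Or.inr (Or.inr (Or.inl ⟨hx.1, hx.2⟩))
    exact hle h
  · rintro (rfl | rfl | ⟨ha, hb⟩ | h)
    · exact zero_mem _
    · exact AddSubmonoid.subset_closure (Set.mem_union_left _ rfl)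
    · exact AddSubmonoid.subset_closure (Set.mem_union_right _ ⟨ha, hb⟩)
    · exact big_mem m hm n h

private lemma key (m : ℕ) (hm : 2 ≤ m) :
    {n : ℕ | n ∉ AddSubmonoid.closure
        ({2*m+1} ∪ Set.Icc (3*m+2) (4*m+2) : Set ℕ)}.ncard = 4*m := by
  have hset : {n : ℕ | n ∉ AddSubmonoid.closure
        ({2*m+1} ∪ Set.Icc (3*m+2) (4*m+2) : Set ℕ)} =
      ↑(Finset.Ioc 0 (2*m) ∪ Finset.Icc (2*m+2) (3*m+1) ∪ Finset.Icc (4*m+3) (5*m+2)) := by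
    ext n
    simp only [Set.mem_setOf_eq, mem_closure_key m hm, Finset.coe_union, Set.mem_union,
      Finset.coe_Ioc, Finset.coe_Icc, Set.mem_Ioc, Set.mem_Icc]
    omega
  rw [hset, Set.ncard_coe_finset]
  rw [Finset.card_union_of_disjoint, Finset.card_union_of_disjoint]
  · simp [Nat.card_Icc, Nat.card_Ioc]; omega
  · rw [Finset.disjoint_left]
    intro a ha hb
    simp only [Finset.mem_Icc, Finset.mem_Ioc] at ha hb
    omega
  · rw [Finset.disjoint_left]
    intro a ha hb
    simp only [Finset.mem_union, Finset.mem_Icc, Finset.mem_Ioc] at ha hb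
    omega

theorem stmt_1 (q₀ Δ : ℕ)
    (hq : ∃ p k : ℕ, Nat.Prime p ∧ 0 < k ∧ q₀ = p ^ k)
    (hΔ : Δ = (q₀ + 1) / 2) (hprime : Nat.Prime Δ) (h3 : 3 < Δ) :
    {n : ℕ | n ∉ AddSubmonoid.closure
        ({q₀ + 1 - Δ} ∪ Set.Icc (q₀ + 1 - (Δ - 1) / 2) (q₀ + 1))}.ncard
      = q₀ - 1 := by
  obtain ⟨p, k, hp, hk, hq0⟩ := hq
  -- q₀ is odd
  have hodd : Odd q₀ := by
    by_contra heven
    rw [Nat.not_odd_iff_even] at heven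
    have hp2 : p = 2 := by
      have : Even p := by
        rw [hq0, Nat.even_pow] at heven
        exact heven.1
      exact (Nat.Prime.even_iff hp).mp this
    obtain ⟨t, ht⟩ := heven
    have hΔq : 2 * Δ = q₀ := by omega
    have hq2 : q₀ = 2 ^ k := by rw [hq0, hp2]
    have hdvd : Δ ∣ 2 ^ k := by
      refine ⟨2, ?_⟩
      omega
    have := Nat.le_of_dvd (by norm_num) (hprime.dvd_of_dvd_pow hdvd)
    omega
  have h2Δ : q₀ + 1 = 2 * Δ := by
    obtain ⟨t, ht⟩ := hodd
    omega
  have hΔodd : Odd Δ := hprime.odd_of_ne_two (by omega)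
  obtain ⟨m, hmΔ⟩ := hΔodd
  have hm : 2 ≤ m := by omega
  have hA : q₀ + 1 - Δ = 2*m+1 := by omega
  have hB : q₀ + 1 - (Δ - 1) / 2 = 3*m+2 := by omega
  have hC : q₀ + 1 = 4*m+2 := by omega
  have hD : q₀ - 1 = 4*m := by omega
  rw [hA, hB, hC, hD]
  exact key m hm
end

section
/- Let q₀ be a prime power such that Δ = (q₀+1)/2 is a prime greater than 3, and set h = q₀+1-Δ = (q₀+1)/2. Then the numerical semigroup Γ generated by {h, h+2, h+4, ..., 2h-1, 2h} (that is, h together with all even offsets h+2j for 1 ≤ j ≤ (h-1)/2 and also 2h-1 and 2h — equivalently Γ = ⟨q₀+1-Δ, q₀+1-(Δ-2), q₀+1-(Δ-4), ..., q₀, q₀+1⟩) has exactly q₀-1 gaps. -/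
private def genS (m : ℕ) : Set ℕ :=
  (fun j => (2*m+1) + 2*j) '' Set.Iic m ∪ {4*m+2}

private lemma gen_mem (m j : ℕ) (hj : j ≤ m) :
    (2*m+1) + 2*j ∈ AddSubmonoid.closure (genS m) :=
  AddSubmonoid.subset_closure (Or.inl ⟨j, hj, rfl⟩)

private lemma top_mem (m : ℕ) : 4*m+2 ∈ AddSubmonoid.closure (genS m) :=
  AddSubmonoid.subset_closure (Or.inr rfl)

private lemma even_mem (m : ℕ) : ∀ n, n % 2 = 0 → 4*m+2 ≤ n →
    n ∈ AddSubmonoid.closure (genS m) := by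
  intro n
  induction n using Nat.strong_induction_on with
  | _ n ih =>
    intro h1 h2
    by_cases hb : n ≤ 8*m+2
    · by_cases hc : n ≤ 6*m+2
      · have hn : n = ((2*m+1)+2*0) + ((2*m+1)+2*((n-(4*m+2))/2)) := by omega
        rw [hn]
        exact add_mem (gen_mem m 0 (by omega)) (gen_mem m _ (by omega))
      · have hn : n = ((2*m+1)+2*m) + ((2*m+1)+2*((n-(6*m+2))/2)) := by omega
        rw [hn]
        exact add_mem (gen_mem m m le_rfl) (gen_mem m _ (by omega))
    · have hn : n = (4*m+2) + (n - (4*m+2)) := by omega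
      rw [hn]
      exact add_mem (top_mem m) (ih _ (by omega) (by omega) (by omega))

private lemma closure_eq (m : ℕ) (n : ℕ) :
    n ∈ AddSubmonoid.closure (genS m) ↔
      (n = 0 ∨ (n % 2 = 1 ∧ 2*m+1 ≤ n ∧ n ≤ 4*m+1) ∨
        (n % 2 = 0 ∧ 4*m+2 ≤ n) ∨ (n % 2 = 1 ∧ 6*m+3 ≤ n)) := by
  constructor
  · intro h
    induction h using AddSubmonoid.closure_induction with
    | mem x hx =>
      rcases hx with ⟨j, hj, rfl⟩ | hx
      · simp only [Set.mem_Iic] at hj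
        dsimp only
        omega
      · simp only [Set.mem_singleton_iff] at hx
        omega
    | zero => omega
    | add a b _ _ ha hb => omega
  · intro h
    rcases h with h | ⟨h1, h2, h3⟩ | ⟨h1, h2⟩ | ⟨h1, h2⟩
    · subst h; exact zero_mem _
    · have hn : n = (2*m+1) + 2*((n-(2*m+1))/2) := by omega
      rw [hn]
      exact gen_mem m _ (by omega)
    · exact even_mem m n h1 h2
    · have hn : n = ((2*m+1)+2*0) + (n - (2*m+1)) := by omega
      rw [hn]
      exact add_mem (gen_mem m 0 (by omega)) (even_mem m _ (by omega) (by omega))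

private lemma gap_count (m : ℕ) :
    {n : ℕ | n ∉ AddSubmonoid.closure (genS m)}.ncard = 4*m := by
  classical
  set F : Finset ℕ :=
    ((Finset.range m).image (fun k => 2*k+1) ∪
     (Finset.range (2*m)).image (fun k => 2*k+2)) ∪
    (Finset.range m).image (fun k => 4*m+3+2*k) with hF
  have hset : {n : ℕ | n ∉ AddSubmonoid.closure (genS m)} = ↑F := by
    ext n
    simp only [Set.mem_setOf_eq, closure_eq, hF, Finset.coe_union,
      Set.mem_union, Finset.coe_image, Set.mem_image, Finset.mem_coe,
      Finset.mem_range]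
    constructor
    · intro h
      by_cases h1 : n % 2 = 1
      · by_cases h2 : n < 2*m+1
        · exact Or.inl (Or.inl ⟨n/2, by omega, by omega⟩)
        · exact Or.inr ⟨(n-(4*m+3))/2, by omega, by omega⟩
      · exact Or.inl (Or.inr ⟨(n-2)/2, by omega, by omega⟩)
    · rintro ((⟨k, hk, rfl⟩ | ⟨k, hk, rfl⟩) | ⟨k, hk, rfl⟩) <;> omega
  rw [hset, Set.ncard_coe_finset]
  have hinj1 : Function.Injective (fun k : ℕ => 2*k+1) := by
    intro a b h; simp only [add_left_inj] at h; omega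
  have hinj2 : Function.Injective (fun k : ℕ => 2*k+2) := by
    intro a b h; simp only [add_left_inj] at h; omega
  have hinj3 : Function.Injective (fun k : ℕ => 4*m+3+2*k) := by
    intro a b h; simp only [add_right_inj] at h; omega
  have hd1 : Disjoint ((Finset.range m).image (fun k => 2*k+1))
      ((Finset.range (2*m)).image (fun k => 2*k+2)) := by
    simp only [Finset.disjoint_left, Finset.mem_image, Finset.mem_range]
    rintro a ⟨k, hk, hak⟩ ⟨k', hk', h⟩
    omega
  have hd2 : Disjoint
      (((Finset.range m).image (fun k => 2*k+1) ∪
        (Finset.range (2*m)).image (fun k => 2*k+2)))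
      ((Finset.range m).image (fun k => 4*m+3+2*k)) := by
    simp only [Finset.disjoint_left, Finset.mem_union, Finset.mem_image,
      Finset.mem_range]
    rintro a (⟨k, hk, hak⟩ | ⟨k, hk, hak⟩) ⟨k', hk', h⟩ <;> omega
  rw [hF, Finset.card_union_of_disjoint hd2, Finset.card_union_of_disjoint hd1,
    Finset.card_image_of_injective _ hinj1, Finset.card_image_of_injective _ hinj2,
    Finset.card_image_of_injective _ hinj3, Finset.card_range,
    Finset.card_range]
  omega

theorem stmt_2 (q₀ Δ : ℕ)
    (hq : ∃ p k : ℕ, Nat.Prime p ∧ 0 < k ∧ q₀ = p ^ k)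
    (hΔ : Δ = (q₀ + 1) / 2) (hprime : Nat.Prime Δ) (h3 : 3 < Δ) :
    {n : ℕ | n ∉ AddSubmonoid.closure
        ((fun j => (q₀ + 1 - Δ) + 2 * j) '' Set.Iic ((Δ - 1) / 2)
          ∪ {q₀ + 1})}.ncard = q₀ - 1 := by
  obtain ⟨p, k, hp, hk, hq0⟩ := hq
  -- q₀ is odd
  have hodd : q₀ % 2 = 1 := by
    rcases hp.eq_two_or_odd with h2 | hpo
    · exfalso
      subst h2
      have hk1 : 2^k = 2 * 2^(k-1) := by
        conv_lhs => rw [show k = (k-1) + 1 by omega]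
        ring
      have hΔeq : Δ = 2^(k-1) := by omega
      have : Δ ∣ 2 := hprime.dvd_of_dvd_pow (n := k-1) hΔeq.dvd
      have := Nat.le_of_dvd (by norm_num) this
      omega
    · subst hq0
      obtain ⟨t, ht⟩ := (Odd.pow (n := k) ⟨(p-1)/2, by omega⟩ : Odd (p ^ k))
      omega
  -- Δ is odd
  have hΔodd : Δ % 2 = 1 := by
    rcases hprime.eq_two_or_odd with h2 | h
    · omega
    · exact h
  set m := (Δ - 1) / 2 with hm
  have e1 : q₀ + 1 - Δ = 2*m+1 := by omega
  have e2 : q₀ + 1 = 4*m+2 := by omega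
  have e3 : q₀ - 1 = 4*m := by omega
  rw [e1, e2, e3]
  exact gap_count m
end
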